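/- The space of gl(1|1)-invariant vectors in P_{n₁} ⊗ P_{n₂} with n₁ + n₂ = 0 is exactly 2-dimensional, spanned by I₁ = t⊗b + r⊗l − l⊗r + b⊗t and I₂ = b⊗b. -/

import Mathlib

open Matrix Kronecker

noncomputable section Gl11

def PN (n : ℂ) : Matrix (Fin 4) (Fin 4) ℂ :=
  !![n+1, 0, 0, 0; 0, n, 0, 0; 0, 0, n, 0; 0, 0, 0, n-1]
def Pp : Matrix (Fin 4) (Fin 4) ℂ :=
  (1/2 : ℂ) • !![0, 1, 1, 0; 0, 0, 0, 1; 0, 0, 0, -1; 0, 0, 0, 0]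
def Pm : Matrix (Fin 4) (Fin 4) ℂ :=
  (1/2 : ℂ) • !![0, 0, 0, 0; -1, 0, 0, 0; 1, 0, 0, 0; 0, 1, 1, 0]
def Par4 : Matrix (Fin 4) (Fin 4) ℂ :=
  !![-1, 0, 0, 0; 0, 1, 0, 0; 0, 0, 1, 0; 0, 0, 0, -1]

/-- Basis vectors of `P_n` in the chosen coordinates. -/
def vt : Fin 4 → ℂ := ![0, 1, 1, 0]
def vr : Fin 4 → ℂ := ![1, 0, 0, 0]
def vl : Fin 4 → ℂ := ![0, 0, 0, 1]
def vb : Fin 4 → ℂ := ![0, 1/2, -1/2, 0]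

/-- Tensor product of vectors. -/
def tens (v w : Fin 4 → ℂ) : Fin 4 × Fin 4 → ℂ := fun p => v p.1 * w p.2

/-- Invariance under the graded diagonal `gl(1|1)`-action on `P_{n₁} ⊗ P_{n₂}`
(`E` acts by zero). -/
def IsInvPP (n₁ n₂ : ℂ) (x : Fin 4 × Fin 4 → ℂ) : Prop :=
  (PN n₁ ⊗ₖ (1 : Matrix (Fin 4) (Fin 4) ℂ)
    + (1 : Matrix (Fin 4) (Fin 4) ℂ) ⊗ₖ PN n₂).mulVec x = 0 ∧
  (Pp ⊗ₖ (1 : Matrix (Fin 4) (Fin 4) ℂ) + Par4 ⊗ₖ Pp).mulVec x = 0 ∧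
  (Pm ⊗ₖ (1 : Matrix (Fin 4) (Fin 4) ℂ) + Par4 ⊗ₖ Pm).mulVec x = 0

/-- `I₁ = t⊗b + r⊗l − l⊗r + b⊗t`. -/
def I₁ : Fin 4 × Fin 4 → ℂ := tens vt vb + tens vr vl - tens vl vr + tens vb vt
/-- `I₂ = b⊗b`. -/
def I₂ : Fin 4 × Fin 4 → ℂ := tens vb vb

/-! The Cartan element `N` acts on `P_{n₁} ⊗ P_{n₂}` diagonally, by `n₁ + n₂` plus the sum of
the two weight shifts, so for `n₁ + n₂ = 0` an invariant lives on the six coordinates of total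
shift zero. On those, the `ψ⁺`- and `ψ⁻`-conditions are eight linear equations of rank four,
leaving the plane spanned by `I₁` and `I₂`. -/

def weightShift : Fin 4 → ℂ := ![1, 0, 0, -1]

def tensorN (n₁ n₂ : ℂ) : Matrix (Fin 4 × Fin 4) (Fin 4 × Fin 4) ℂ :=
  PN n₁ ⊗ₖ (1 : Matrix (Fin 4) (Fin 4) ℂ) + (1 : Matrix (Fin 4) (Fin 4) ℂ) ⊗ₖ PN n₂

def tensorPsiPlus : Matrix (Fin 4 × Fin 4) (Fin 4 × Fin 4) ℂ :=
  Pp ⊗ₖ (1 : Matrix (Fin 4) (Fin 4) ℂ) + Par4 ⊗ₖ Pp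

def tensorPsiMinus : Matrix (Fin 4 × Fin 4) (Fin 4 × Fin 4) ℂ :=
  Pm ⊗ₖ (1 : Matrix (Fin 4) (Fin 4) ℂ) + Par4 ⊗ₖ Pm

def invariants (n₁ n₂ : ℂ) : Submodule ℂ (Fin 4 × Fin 4 → ℂ) :=
  LinearMap.ker (tensorN n₁ n₂).mulVecLin ⊓ LinearMap.ker tensorPsiPlus.mulVecLin ⊓
    LinearMap.ker tensorPsiMinus.mulVecLin

lemma mem_invariants_iff {n₁ n₂ : ℂ} {x : Fin 4 × Fin 4 → ℂ} :
    x ∈ invariants n₁ n₂ ↔ IsInvPP n₁ n₂ x := by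
  simp only [invariants, Submodule.mem_inf, LinearMap.mem_ker, mulVecLin_apply, and_assoc]
  rfl

lemma PN_eq_diagonal (n : ℂ) : PN n = diagonal fun i => n + weightShift i := by
  ext i j
  fin_cases i <;> fin_cases j <;> simp [PN, weightShift, sub_eq_add_neg]

lemma tensorN_eq_diagonal (n₁ n₂ : ℂ) :
    tensorN n₁ n₂ = diagonal fun p => n₁ + n₂ + weightShift p.1 + weightShift p.2 := by
  rw [tensorN, PN_eq_diagonal, PN_eq_diagonal, ← diagonal_one, diagonal_kronecker_diagonal,
    diagonal_kronecker_diagonal, diagonal_add]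
  congr 1
  ext p
  simp only [mul_one, one_mul]
  ring

lemma mulVec_tensorN_eq_zero_iff {n₁ n₂ : ℂ} (hn : n₁ + n₂ = 0) (x : Fin 4 × Fin 4 → ℂ) :
    tensorN n₁ n₂ *ᵥ x = 0 ↔
      ∀ p : Fin 4 × Fin 4, weightShift p.1 + weightShift p.2 ≠ 0 → x p = 0 := by
  simp only [tensorN_eq_diagonal, funext_iff, mulVec_diagonal, hn, zero_add, Pi.zero_apply,
    mul_eq_zero]
  exact forall_congr' fun p => or_iff_not_imp_left

lemma span_I₁_I₂_le_invariants {n₁ n₂ : ℂ} (hn : n₁ + n₂ = 0) :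
    Submodule.span ℂ {I₁, I₂} ≤ invariants n₁ n₂ := by
  rw [Submodule.span_le]
  rintro _ (rfl | rfl) <;>
    refine mem_invariants_iff.2 ⟨(mulVec_tensorN_eq_zero_iff hn _).2 ?_, ?_, ?_⟩ <;>
    first
    | rintro ⟨i, j⟩ hw
      fin_cases i <;> fin_cases j <;> simp [weightShift, I₁, I₂, tens, vt, vr, vl, vb] at hw ⊢
    | ext ⟨i, j⟩
      fin_cases i <;> fin_cases j <;>
        simp [mulVec, dotProduct, Fintype.sum_prod_type, Fin.sum_univ_four, Pp, Pm, Par4,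
          I₁, I₂, tens, vt, vr, vl, vb] <;> ring

-- At `(0, 3)` the vectors `I₁, I₂` take the values `1, 0`; at `(1, 2)` they take `0, -1/4`.
lemma eq_smul_I₁_add_smul_I₂ {n₁ n₂ : ℂ} (hn : n₁ + n₂ = 0) {x : Fin 4 × Fin 4 → ℂ}
    (hx : x ∈ invariants n₁ n₂) : x = x (0, 3) • I₁ + (-4 * x (1, 2)) • I₂ := by
  obtain ⟨hN, hPlus, hMinus⟩ := mem_invariants_iff.1 hx
  have hsupp := (mulVec_tensorN_eq_zero_iff hn x).1 hN
  -- these four of the eight equations already have rank four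
  have p01 := congrFun hPlus (0, 1)
  have p10 := congrFun hPlus (1, 0)
  have m13 := congrFun hMinus (1, 3)
  have m23 := congrFun hMinus (2, 3)
  simp [mulVec, dotProduct, Fintype.sum_prod_type, Fin.sum_univ_four, Pp, Pm, Par4]
    at p01 p10 m13 m23
  ext ⟨i, j⟩
  fin_cases i <;> fin_cases j <;> simp [I₁, I₂, tens, vt, vr, vl, vb] <;>
    try exact hsupp _ (by simp [weightShift])
  · linear_combination 2 * m13
  · ring
  · linear_combination 2 * p01 - 2 * m13
  · linear_combination 2 * m23 - 2 * p01 + 2 * m13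
  · linear_combination 2 * p10 - 2 * m13

lemma invariants_eq_span {n₁ n₂ : ℂ} (hn : n₁ + n₂ = 0) :
    invariants n₁ n₂ = Submodule.span ℂ {I₁, I₂} := by
  refine le_antisymm (fun x hx => ?_) (span_I₁_I₂_le_invariants hn)
  rw [eq_smul_I₁_add_smul_I₂ hn hx]
  exact Submodule.mem_span_pair.2 ⟨_, _, rfl⟩

lemma linearIndependent_I₁_I₂ : LinearIndependent ℂ ![I₁, I₂] := by
  rw [linearIndependent_fin2]
  refine ⟨fun h => ?_, fun a h => ?_⟩
  · simpa [I₂, tens, vb] using congrFun h (1, 1)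
  · simpa [I₁, I₂, tens, vt, vr, vl, vb] using congrFun h (0, 3)

/-- For `n₁ + n₂ = 0`, the space of `gl(1|1)`-invariant vectors of
`P_{n₁} ⊗ P_{n₂}` is exactly two-dimensional, spanned by `I₁` and `I₂`. -/
theorem stmt13 (n₁ n₂ : ℂ) (hn : n₁ + n₂ = 0) :
    LinearIndependent ℂ ![I₁, I₂] ∧
    ∀ x : Fin 4 × Fin 4 → ℂ,
      IsInvPP n₁ n₂ x ↔ ∃ a c : ℂ, x = a • I₁ + c • I₂ := by
  refine ⟨linearIndependent_I₁_I₂, fun x => ?_⟩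
  rw [← mem_invariants_iff, invariants_eq_span hn, Submodule.mem_span_pair]
  exact exists₂_congr fun a c => eq_comm

end Gl11
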